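/- arXiv:1711.10387 — 2 statements merged into one kernel-verified Lean document; each statement's English description precedes it below -/
import Mathlib

section
/- Every compact subgroup K of the additive group ℚ_p is of the form K = p^l ℤ_p for some integer l, or K = {0}. -/
/-!
A nonzero compact subgroup `K` has an element `x₀` of maximal norm, so `K` lies in the closed
ball of radius `‖x₀‖`. Conversely, `K` is closed and contains `ℤ x₀`, hence also its closure
`ℤ_[p] x₀`, which is that whole ball. Balls around `0` are exactly the sets `p^l ℤ_[p]`.
-/

namespace Padic

variable {p : ℕ} [Fact p.Prime]

theorem exists_eq_mul_padicInt_iff_norm_le {x y : ℚ_[p]} (hy : y ≠ 0) :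
    (∃ c : ℤ_[p], x = y * c) ↔ ‖x‖ ≤ ‖y‖ := by
  constructor
  · rintro ⟨c, rfl⟩
    simpa [norm_mul] using mul_le_of_le_one_right (norm_nonneg y) c.norm_le_one
  · intro hxy
    have hc : ‖x / y‖ ≤ 1 := by
      rw [norm_div]
      exact div_le_one_of_le₀ hxy (norm_nonneg y)
    exact ⟨⟨x / y, hc⟩, (mul_div_cancel₀ x hy).symm⟩

theorem mul_padicInt_mem_of_isClosed {K : AddSubgroup ℚ_[p]} (hK : IsClosed (K : Set ℚ_[p]))
    {x : ℚ_[p]} (hx : x ∈ K) (c : ℤ_[p]) : x * c ∈ K :=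
  PadicInt.denseRange_intCast.induction_on c
    (hK.preimage ((continuous_const_mul x).comp continuous_subtype_val))
    fun n => by simpa [zsmul_eq_mul, mul_comm] using K.zsmul_mem hx n

theorem mem_of_norm_le_of_isClosed {K : AddSubgroup ℚ_[p]} (hK : IsClosed (K : Set ℚ_[p]))
    {x y : ℚ_[p]} (hx : x ∈ K) (hx₀ : x ≠ 0) (hyx : ‖y‖ ≤ ‖x‖) : y ∈ K := by
  obtain ⟨c, rfl⟩ := (exists_eq_mul_padicInt_iff_norm_le hx₀).2 hyx
  exact mul_padicInt_mem_of_isClosed hK hx c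

end Padic

/-- Every compact subgroup `K` of the additive group `ℚ_[p]` is either trivial or of the
form `p^l ℤ_[p]` for some integer `l`. -/
theorem padic_compact_subgroup (p : ℕ) [Fact p.Prime] (K : AddSubgroup ℚ_[p])
    (hK : IsCompact (K : Set ℚ_[p])) :
    K = ⊥ ∨ ∃ l : ℤ, (K : Set ℚ_[p]) = {x : ℚ_[p] | ∃ c : ℤ_[p], x = (p : ℚ_[p]) ^ l * (c : ℚ_[p])} := by
  refine K.bot_or_exists_ne_zero.imp id fun ⟨y, hyK, hy⟩ => ?_
  obtain ⟨x₀, hx₀K, hmax⟩ := hK.exists_isMaxOn ⟨y, hyK⟩ continuous_norm.continuousOn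
  have hx₀ : x₀ ≠ 0 := norm_pos_iff.1 ((norm_pos_iff.2 hy).trans_le (hmax hyK))
  have hp : (p : ℚ_[p]) ≠ 0 := Nat.cast_ne_zero.2 (Fact.out : p.Prime).ne_zero
  refine ⟨x₀.valuation, Set.ext fun x => ?_⟩
  rw [Set.mem_ofPred_eq, Padic.exists_eq_mul_padicInt_iff_norm_le (zpow_ne_zero _ hp),
    Padic.norm_p_zpow, ← Padic.norm_eq_zpow_neg_valuation hx₀]
  exact ⟨fun hx => hmax hx, Padic.mem_of_norm_le_of_isClosed hK.isClosed hx₀K hx₀⟩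
end

section
/- Let Λ be the 3×3 matrix over ℤ_p with rows (1,1,1), (1,δ₁,δ₂), (1,ε₁,ε₂), where δ₁ is a unit of ℤ_p and δ₂, ε₁, ε₂ are non-units, and suppose det Λ is a unit of ℤ_p. If u, v, w ∈ ℤ(p^∞) (on which ℤ_p acts naturally) satisfy u + v + w ∈ ℤ(p), u + δ₁v + ε₁w = 0 and u + δ₂v + ε₂w = 0, then u = v = 0. -/
/-! Eliminating `w` by Cramer's rule gives `det Λ • u` and `det Λ • v` as multiples of
`s = u + v + w` by cofactors of `Λ` that lie in `p ℤ_p`; since `p • s = 0` both vanish,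
and `det Λ` is a unit. -/

/-- The Prüfer `p`-group `ℤ(p^∞)`, realized as `ℚ_p / ℤ_p` (a `ℤ_p`-module). -/
abbrev PruferGroup (p : ℕ) [Fact p.Prime] :=
  ℚ_[p] ⧸ LinearMap.range (Algebra.linearMap ℤ_[p] ℚ_[p])

section LinearSystem

variable {R M : Type*} [CommRing R] [AddCommGroup M] [Module R M]
  {δ₁ δ₂ ε₁ ε₂ : R} {u v w s : M}

theorem det_smul_fst_eq (hs : u + v + w = s) (h₂ : u + δ₁ • v + ε₁ • w = 0)
    (h₃ : u + δ₂ • v + ε₂ • w = 0) :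
    (δ₁ * ε₂ - δ₂ * ε₁ - δ₁ + δ₂ + ε₁ - ε₂) • u = (δ₁ * ε₂ - δ₂ * ε₁) • s := by
  linear_combination (norm := module) (δ₁ * ε₂ - δ₂ * ε₁) • hs + (δ₂ - ε₂) • h₂ + (ε₁ - δ₁) • h₃

theorem det_smul_snd_eq (hs : u + v + w = s) (h₂ : u + δ₁ • v + ε₁ • w = 0)
    (h₃ : u + δ₂ • v + ε₂ • w = 0) :
    (δ₁ * ε₂ - δ₂ * ε₁ - δ₁ + δ₂ + ε₁ - ε₂) • v = (ε₁ - ε₂) • s := by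
  linear_combination (norm := module) (ε₁ - ε₂) • hs + (ε₂ - 1) • h₂ + (1 - ε₁) • h₃

end LinearSystem

theorem smul_eq_zero_of_dvd {R M : Type*} [CommRing R] [AddCommGroup M] [Module R M]
    {π c : R} {s : M} (hs : π • s = 0) (hc : π ∣ c) : c • s = 0 := by
  obtain ⟨k, rfl⟩ := hc
  rw [mul_comm, mul_smul, hs, smul_zero]

theorem PadicInt.natCast_dvd_of_not_isUnit {p : ℕ} [Fact p.Prime] {x : ℤ_[p]}
    (hx : ¬IsUnit x) : (p : ℤ_[p]) ∣ x :=
  (PadicInt.norm_lt_one_iff_dvd x).1 (PadicInt.not_isUnit_iff.1 hx)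

theorem prufer_kernel_triviality_general (p : ℕ) [Fact p.Prime]
    (δ₁ δ₂ ε₁ ε₂ : ℤ_[p])
    (hδ₂ : ¬IsUnit δ₂) (hε₁ : ¬IsUnit ε₁) (hε₂ : ¬IsUnit ε₂)
    (hdet : IsUnit (δ₁ * ε₂ - δ₂ * ε₁ - δ₁ + δ₂ + ε₁ - ε₂))
    (u v w : PruferGroup p)
    (h1 : (p : ℤ_[p]) • (u + v + w) = 0)
    (h2 : u + δ₁ • v + ε₁ • w = 0)
    (h3 : u + δ₂ • v + ε₂ • w = 0) :
    u = 0 ∧ v = 0 := by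
  have hpδ₂ := PadicInt.natCast_dvd_of_not_isUnit hδ₂
  have hpε₁ := PadicInt.natCast_dvd_of_not_isUnit hε₁
  have hpε₂ := PadicInt.natCast_dvd_of_not_isUnit hε₂
  constructor
  · rw [← hdet.smul_eq_zero, det_smul_fst_eq rfl h2 h3]
    exact smul_eq_zero_of_dvd h1 <|
      dvd_sub (dvd_mul_of_dvd_right hpε₂ _) (dvd_mul_of_dvd_left hpδ₂ _)
  · rw [← hdet.smul_eq_zero, det_smul_snd_eq rfl h2 h3]
    exact smul_eq_zero_of_dvd h1 (dvd_sub hpε₁ hpε₂)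

/-- Let `Λ` have rows `(1,1,1), (1,δ₁,δ₂), (1,ε₁,ε₂)` over `ℤ_p` with `δ₁` a unit,
`δ₂, ε₁, ε₂` non-units, and `det Λ` a unit. If `u, v, w ∈ ℤ(p^∞)` satisfy
`u + v + w ∈ ℤ(p)`, `u + δ₁v + ε₁w = 0` and `u + δ₂v + ε₂w = 0`, then `u = v = 0`. -/
theorem prufer_kernel_triviality (p : ℕ) [Fact p.Prime]
    (δ₁ δ₂ ε₁ ε₂ : ℤ_[p])
    (hδ₁ : IsUnit δ₁) (hδ₂ : ¬IsUnit δ₂) (hε₁ : ¬IsUnit ε₁) (hε₂ : ¬IsUnit ε₂)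
    (hdet : IsUnit (δ₁ * ε₂ - δ₂ * ε₁ - δ₁ + δ₂ + ε₁ - ε₂))
    (u v w : PruferGroup p)
    (h1 : (p : ℤ_[p]) • (u + v + w) = 0)
    (h2 : u + δ₁ • v + ε₁ • w = 0)
    (h3 : u + δ₂ • v + ε₂ • w = 0) :
    u = 0 ∧ v = 0 :=
  prufer_kernel_triviality_general p δ₁ δ₂ ε₁ ε₂ hδ₂ hε₁ hε₂ hdet u v w h1 h2 h3
end
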